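/- Let J and J' be finite sets, φ : J → J and ψ : J' → J' maps, and a : J → J' a surjection satisfying a∘φ = ψ∘a. If the restriction of a to gim(φ) is injective, then φ and ψ are shift equivalent. -/

import Mathlib

/-- Self-maps `φ : J → J` and `ψ : J' → J'` are *shift equivalent* if there exist maps
`a : J → J'` and `b : J' → J` and an integer `m ≥ 0` such that `a ∘ φ = ψ ∘ a`,
`b ∘ ψ = φ ∘ b`, `b ∘ a = φ^[m]` and `a ∘ b = ψ^[m]`. -/
def FunShiftEquiv {J J' : Type*} (φ : J → J) (ψ : J' → J') : Prop :=
  ∃ (a : J → J') (b : J' → J) (m : ℕ),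
    a ∘ φ = ψ ∘ a ∧ b ∘ ψ = φ ∘ b ∧ b ∘ a = φ^[m] ∧ a ∘ b = ψ^[m]

/-- The generalized image `gim(φ) = ⋂ₙ φⁿ(J)`, the largest subset of `J` invariant under `φ`. -/
def gimSet {J : Type*} (φ : J → J) : Set J :=
  ⋂ n : ℕ, Set.range φ^[n]

theorem mapsTo_gimSet {J : Type*} (φ : J → J) : Set.MapsTo φ (gimSet φ) (gimSet φ) := by
  intro x hx
  simp only [gimSet, Set.mem_iInter] at hx ⊢
  intro n
  obtain ⟨y, hy⟩ := hx n
  exact ⟨φ y, by rw [← Function.iterate_succ_apply, Function.iterate_succ_apply', hy]⟩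

/-- The *induced permutation* of `φ`: the restriction of `φ` to `gim(φ)`, regarded as a
self-map of `gim(φ)`. -/
def inducedPerm {J : Type*} (φ : J → J) : gimSet φ → gimSet φ :=
  Set.MapsTo.restrict φ _ _ (mapsTo_gimSet φ)

/-!
For finite `J` the decreasing chain of ranges `φⁿ(J)` stabilizes, so `gim(φ) = φᵐ(J)` for
some `m`. Take `b := φᵐ ∘ s` for a section `s` of `a`; it lands in `gim(φ)`, and
`a ∘ b = ψᵐ` by the semiconjugacy. The remaining identities `b ∘ ψ = φ ∘ b` and `b ∘ a = φᵐ`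
compare maps into `gim(φ)` whose composites with `a` agree, so they follow from injectivity of
`a` on `gim(φ)`.
-/

theorem antitone_range_iterate {J : Type*} (φ : J → J) :
    Antitone fun n => Set.range φ^[n] :=
  antitone_nat_of_succ_le fun n => by
    rw [Function.iterate_succ]
    exact Set.range_comp_subset_range φ φ^[n]

theorem exists_gimSet_eq_range_iterate {J : Type*} [Finite J] (φ : J → J) :
    ∃ m, gimSet φ = Set.range φ^[m] := by
  obtain ⟨m, hm⟩ := WellFoundedLT.antitone_chain_condition (antitone_range_iterate φ)
  refine ⟨m, le_antisymm (Set.iInter_subset _ m) (Set.subset_iInter fun k => ?_)⟩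
  exact (hm _ (le_max_left m k)).trans_le (antitone_range_iterate φ (le_max_right m k))

theorem funShiftEquiv_of_semiconj_general {J J' : Type*} [Finite J]
    (φ : J → J) (ψ : J' → J') (a : J → J')
    (hsurj : Function.Surjective a) (hsemi : a ∘ φ = ψ ∘ a)
    (hinj : Set.InjOn a (gimSet φ)) :
    FunShiftEquiv φ ψ := by
  have hsc : Function.Semiconj a φ ψ := congrFun hsemi
  obtain ⟨m, hm⟩ := exists_gimSet_eq_range_iterate φ
  have iterate_mem : ∀ x, φ^[m] x ∈ gimSet φ := fun x => hm ▸ Set.mem_range_self x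
  obtain ⟨b, hb, hab⟩ : ∃ b : J' → J, (∀ y, b y ∈ gimSet φ) ∧ ∀ y, a (b y) = ψ^[m] y :=
    ⟨φ^[m] ∘ Function.surjInv hsurj, fun _ => iterate_mem _, fun y => by
      rw [Function.comp_apply, (hsc.iterate_right m).eq, Function.surjInv_eq hsurj]⟩
  refine ⟨a, b, m, hsemi, funext fun y => ?_, funext fun x => ?_, funext hab⟩
  · refine hinj (hb (ψ y)) (mapsTo_gimSet φ (hb y)) ?_
    change a (b (ψ y)) = a (φ (b y))
    rw [hab, hsc.eq, hab, ← Function.iterate_succ_apply, Function.iterate_succ_apply']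
  · refine hinj (hb (a x)) (iterate_mem x) ?_
    rw [hab, (hsc.iterate_right m).eq]

/-- If `a : J → J'` is a surjection with `a ∘ φ = ψ ∘ a` which is injective on `gim(φ)`,
then the finite maps `φ` and `ψ` are shift equivalent. -/
theorem funShiftEquiv_of_semiconj {J J' : Type*} [Finite J] [Finite J']
    (φ : J → J) (ψ : J' → J') (a : J → J')
    (hsurj : Function.Surjective a) (hsemi : a ∘ φ = ψ ∘ a)
    (hinj : Set.InjOn a (gimSet φ)) :
    FunShiftEquiv φ ψ :=
  funShiftEquiv_of_semiconj_general φ ψ a hsurj hsemi hinj
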